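/- Let w_{i₁}⋯w_{i_n} be a reduced word in the Weyl group W (with n ≥ 1) and let γ ∈ V satisfy ⟨γ, α⟩ ≥ 0 for every α ∈ Δ. Then ⟨w_{i₁}w_{i₂}⋯w_{i_n}(γ), α_{i₁}⟩ ≤ 0. -/

import Mathlib

open scoped RealInnerProductSpace

noncomputable section

/-!
Write the word as `s_a w`, where `w` is the word with its first letter removed. Since `s_a` is an
isometry sending `α_a` to `-α_a`, we have `⟨s_a w γ, α_a⟩ = -⟨γ, w⁻¹ α_a⟩`, and this is `≤ 0` as soon
as the root `w⁻¹ α_a` is positive. If it were negative, the exchange condition would express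
`w⁻¹ s_a` by a word with one letter fewer than `w`, and inverting it would express `s_a w` by a word
shorter than the reduced one. The exchange condition is proved by induction on the word, from the
fact that a simple reflection `s_i` permutes the positive roots other than `α_i`.
-/

namespace MDS

def wrefl (V : Type) [NormedAddCommGroup V] [InnerProductSpace ℝ V] (α : V) : V → V :=
  fun v => v - (2 * ⟪v, α⟫ / ⟪α, α⟫) • α

variable {V : Type} [NormedAddCommGroup V] [InnerProductSpace ℝ V]

theorem coe_reflection_orthogonal_singleton (α : V) :
    ⇑(ℝ ∙ α)ᗮ.reflection = wrefl V α := by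
  funext v
  rw [Submodule.reflection_orthogonal_apply, Submodule.reflection_singleton_apply, wrefl,
    real_inner_self_eq_norm_sq, real_inner_comm]
  simp only [RCLike.ofReal_real_eq_id, id]
  module

theorem inner_reflection_orthogonal_singleton_self (α u : V) :
    ⟪(ℝ ∙ α)ᗮ.reflection u, α⟫ = -⟪u, α⟫ := by
  rw [LinearIsometryEquiv.inner_map_eq_flip, Submodule.reflection_symm,
    Submodule.reflection_orthogonalComplement_singleton_eq_neg, inner_neg_right]

theorem reflection_orthogonal_singleton_map_mul (f : V ≃ₗᵢ[ℝ] V) (α : V) :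
    (ℝ ∙ f α)ᗮ.reflection * f = f * (ℝ ∙ α)ᗮ.reflection := by
  ext v
  simp only [LinearIsometryEquiv.coe_mul, Function.comp_apply,
    coe_reflection_orthogonal_singleton, wrefl, f.inner_map_map, map_sub, map_smul]

section WeylGroup

variable {r : ℕ} (Δ : Fin r → V)

def wordProd (l : List (Fin r)) : V ≃ₗᵢ[ℝ] V :=
  (l.map fun i => (ℝ ∙ Δ i)ᗮ.reflection).prod

@[simp]
theorem wordProd_cons (a : Fin r) (l : List (Fin r)) :
    wordProd Δ (a :: l) = (ℝ ∙ Δ a)ᗮ.reflection * wordProd Δ l :=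
  List.prod_cons

theorem wordProd_reverse (l : List (Fin r)) : wordProd Δ l.reverse = (wordProd Δ l)⁻¹ := by
  simp [wordProd, List.prod_inv_reverse, Function.comp_def, Submodule.reflection_inv]

theorem coe_wordProd (l : List (Fin r)) :
    ⇑(wordProd Δ l) = (l.map fun i => wrefl V (Δ i)).foldr (· ∘ ·) id := by
  induction l with
  | nil => rfl
  | cons a l ih =>
    rw [wordProd_cons, LinearIsometryEquiv.coe_mul, ih, coe_reflection_orthogonal_singleton]
    rfl

theorem foldr_ofFn_wrefl {m : ℕ} (κ : Fin m → Fin r) :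
    (List.ofFn fun t => wrefl V (Δ (κ t))).foldr (· ∘ ·) id = wordProd Δ (List.ofFn κ) := by
  rw [coe_wordProd, List.map_ofFn]
  rfl

theorem wordProd_apply_mem {Φ : Set V} (hrefl : ∀ α ∈ Φ, ∀ β ∈ Φ, wrefl V α β ∈ Φ)
    (hΔΦ : ∀ j, Δ j ∈ Φ) (l : List (Fin r)) {β : V} (hβ : β ∈ Φ) : wordProd Δ l β ∈ Φ := by
  induction l with
  | nil => exact hβ
  | cons a l ih =>
    rw [wordProd_cons, LinearIsometryEquiv.coe_mul, Function.comp_apply,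
      coe_reflection_orthogonal_singleton]
    exact hrefl _ (hΔΦ a) _ ih

end WeylGroup

section Positive

variable {r : ℕ} (Δ : Fin r → V)

def IsPositive (β : V) : Prop :=
  ∃ c : Fin r → ℝ, β = ∑ j, c j • Δ j ∧ ∀ j, 0 ≤ c j

variable {Δ}

theorem isPositive_apply (i : Fin r) : IsPositive Δ (Δ i) :=
  ⟨Pi.single i 1, by simp [Pi.single_apply], fun j => by
    rw [Pi.single_apply]; split_ifs <;> norm_num⟩

theorem isPositive_or_isPositive_neg {Φ : Set V}
    (hbase : ∀ β ∈ Φ, ∃ c : Fin r → ℝ,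
      β = ∑ j : Fin r, c j • Δ j ∧ ((∀ j, 0 ≤ c j) ∨ (∀ j, c j ≤ 0)))
    {β : V} (hβ : β ∈ Φ) : IsPositive Δ β ∨ IsPositive Δ (-β) := by
  obtain ⟨c, rfl, hc | hc⟩ := hbase β hβ
  · exact .inl ⟨c, rfl, hc⟩
  · exact .inr ⟨-c, by simp [Finset.sum_neg_distrib], fun j => neg_nonneg.2 (hc j)⟩

theorem IsPositive.inner_nonneg {β γ : V} (hβ : IsPositive Δ β)
    (hγ : ∀ j, 0 ≤ ⟪γ, Δ j⟫) : 0 ≤ ⟪γ, β⟫ := by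
  obtain ⟨c, rfl, hc⟩ := hβ
  rw [inner_sum]
  exact Finset.sum_nonneg fun j _ => by
    rw [real_inner_smul_right]; exact mul_nonneg (hc j) (hγ j)

-- The coefficients of `β` and of `-(β - t • Δ i)` add up to zero away from `i`.
theorem IsPositive.exists_eq_smul_of_isPositive_neg_sub (hind : LinearIndependent ℝ Δ)
    {β : V} (hβ : IsPositive Δ β) {t : ℝ} {i : Fin r}
    (h : IsPositive Δ (-(β - t • Δ i))) : ∃ c : ℝ, β = c • Δ i := by
  obtain ⟨c, rfl, hc⟩ := hβ
  obtain ⟨d, hd, hd₀⟩ := h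
  have hsum : ∑ j, (c + d) j • Δ j = ∑ j, (Pi.single i t : Fin r → ℝ) j • Δ j := by
    simp [add_smul, Finset.sum_add_distrib, ← hd]
  have hc_off : ∀ j ≠ i, c j = 0 := fun j hj => by
    have := Fintype.linearIndependent_iffₛ.1 hind _ _ hsum j
    rw [Pi.add_apply, Pi.single_eq_of_ne hj] at this
    linarith [hc j, hd₀ j]
  exact ⟨c i, Fintype.sum_eq_single i fun j hj => by rw [hc_off j hj, zero_smul]⟩

theorem IsPositive.not_isPositive_neg (hind : LinearIndependent ℝ Δ) {β : V} (hβ₀ : β ≠ 0)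
    (hβ : IsPositive Δ β) : ¬IsPositive Δ (-β) := by
  obtain ⟨c, rfl, hc⟩ := hβ
  rintro ⟨d, hd, hd₀⟩
  have hsum : ∑ j, (c + d) j • Δ j = ∑ j, (0 : Fin r → ℝ) j • Δ j := by
    simp [add_smul, Finset.sum_add_distrib, ← hd]
  have hc_zero : c = 0 := funext fun j => show c j = 0 by
    have := Fintype.linearIndependent_iffₛ.1 hind _ _ hsum j
    simp only [Pi.add_apply, Pi.zero_apply] at this
    linarith [hc j, hd₀ j]
  simp [hc_zero] at hβ₀

theorem IsPositive.reflection_of_ne {Φ : Set V} (hind : LinearIndependent ℝ Δ)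
    (h0 : (0 : V) ∉ Φ) (hrefl : ∀ α ∈ Φ, ∀ β ∈ Φ, wrefl V α β ∈ Φ)
    (hline : ∀ α ∈ Φ, {β | β ∈ Φ ∧ ∃ c : ℝ, β = c • α} = {α, -α})
    (hbase : ∀ β ∈ Φ, ∃ c : Fin r → ℝ,
      β = ∑ j : Fin r, c j • Δ j ∧ ((∀ j, 0 ≤ c j) ∨ (∀ j, c j ≤ 0)))
    {i : Fin r} (hi : Δ i ∈ Φ) {β : V} (hβΦ : β ∈ Φ) (hβ : IsPositive Δ β) (hne : β ≠ Δ i) :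
    IsPositive Δ ((ℝ ∙ Δ i)ᗮ.reflection β) := by
  rw [coe_reflection_orthogonal_singleton]
  refine (isPositive_or_isPositive_neg hbase (hrefl _ hi _ hβΦ)).resolve_right fun hneg => ?_
  obtain ⟨c, hc⟩ := hβ.exists_eq_smul_of_isPositive_neg_sub hind hneg
  have hβ_pm : β ∈ ({Δ i, -Δ i} : Set V) := hline _ hi ▸ ⟨hβΦ, c, hc⟩
  rcases hβ_pm with rfl | rfl
  · exact hne rfl
  · exact (isPositive_apply i).not_isPositive_neg hind (fun h => h0 (h ▸ hi)) hβ

end Positive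

theorem exists_wordProd_eq_mul_reflection {r : ℕ} {Δ : Fin r → V} {Φ : Set V}
    (hind : LinearIndependent ℝ Δ) (h0 : (0 : V) ∉ Φ)
    (hrefl : ∀ α ∈ Φ, ∀ β ∈ Φ, wrefl V α β ∈ Φ)
    (hline : ∀ α ∈ Φ, {β | β ∈ Φ ∧ ∃ c : ℝ, β = c • α} = {α, -α})
    (hbase : ∀ β ∈ Φ, ∃ c : Fin r → ℝ,
      β = ∑ j : Fin r, c j • Δ j ∧ ((∀ j, 0 ≤ c j) ∨ (∀ j, c j ≤ 0)))
    (hΔΦ : ∀ j, Δ j ∈ Φ) (l : List (Fin r)) (a : Fin r)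
    (h : IsPositive Δ (-wordProd Δ l (Δ a))) :
    ∃ l' : List (Fin r), l'.length + 1 = l.length ∧
      wordProd Δ l' = wordProd Δ l * (ℝ ∙ Δ a)ᗮ.reflection := by
  have hΦ₀ : ∀ {β}, β ∈ Φ → β ≠ 0 := fun hβ h => h0 (h ▸ hβ)
  induction l with
  | nil => exact absurd h ((isPositive_apply a).not_isPositive_neg hind (hΦ₀ (hΔΦ a)))
  | cons b t ih =>
    have hβΦ := wordProd_apply_mem Δ hrefl hΔΦ t (hΔΦ a)
    rcases isPositive_or_isPositive_neg hbase hβΦ with hpos | hneg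
    · -- `Δ b` is the only positive root that the reflection in `Δ b` makes negative.
      have heq : wordProd Δ t (Δ a) = Δ b := by
        by_contra hne
        rw [wordProd_cons, LinearIsometryEquiv.coe_mul, Function.comp_apply] at h
        refine (hpos.reflection_of_ne hind h0 hrefl hline hbase (hΔΦ b) hβΦ hne).not_isPositive_neg
          hind (hΦ₀ ?_) h
        rw [coe_reflection_orthogonal_singleton]
        exact hrefl _ (hΔΦ b) _ hβΦ
      refine ⟨t, rfl, ?_⟩
      rw [wordProd_cons, ← heq, reflection_orthogonal_singleton_map_mul, mul_assoc,
        Submodule.reflection_mul_reflection, mul_one]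
    · obtain ⟨t', hlen, ht'⟩ := ih hneg
      exact ⟨b :: t', by simp [hlen], by rw [wordProd_cons, wordProd_cons, ht', mul_assoc]⟩

theorem statement_17_general
    (V : Type) [NormedAddCommGroup V] [InnerProductSpace ℝ V]
    (Φ : Set V) (h0 : (0 : V) ∉ Φ)
    (hrefl : ∀ α ∈ Φ, ∀ β ∈ Φ, wrefl V α β ∈ Φ)
    (hline : ∀ α ∈ Φ, {β | β ∈ Φ ∧ ∃ c : ℝ, β = c • α} = {α, -α})
    (r : ℕ) (Δ : Fin r → V)
    (hΔΦ : ∀ j, Δ j ∈ Φ)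
    (hind : LinearIndependent ℝ Δ)
    (hbase : ∀ β ∈ Φ, ∃ c : Fin r → ℝ,
      β = ∑ j : Fin r, c j • Δ j ∧ ((∀ j, 0 ≤ c j) ∨ (∀ j, c j ≤ 0)))
    (N : ℕ) (hN : 0 < N) (ι : Fin N → Fin r)
    (hred : ∀ (m : ℕ) (κ : Fin m → Fin r),
      (List.ofFn fun t => wrefl V (Δ (κ t))).foldr (· ∘ ·) id
          = (List.ofFn fun t => wrefl V (Δ (ι t))).foldr (· ∘ ·) id →
      N ≤ m)
    (γ : V) (hγ : ∀ j : Fin r, 0 ≤ ⟪γ, Δ j⟫) :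
    ⟪((List.ofFn fun t => wrefl V (Δ (ι t))).foldr (· ∘ ·) id) γ, Δ (ι ⟨0, hN⟩)⟫ ≤ 0 := by
  simp only [foldr_ofFn_wrefl] at hred ⊢
  obtain ⟨n, rfl⟩ : ∃ n, N = n + 1 := ⟨N - 1, by omega⟩
  set a := ι ⟨0, hN⟩
  set tail := List.ofFn fun i : Fin n => ι i.succ
  have hι : wordProd Δ (List.ofFn ι) = (ℝ ∙ Δ a)ᗮ.reflection * wordProd Δ tail := by
    rw [List.ofFn_succ, wordProd_cons]
    rfl
  rw [hι, LinearIsometryEquiv.coe_mul, Function.comp_apply,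
    inner_reflection_orthogonal_singleton_self, LinearIsometryEquiv.inner_map_eq_flip,
    ← LinearIsometryEquiv.inv_def, ← wordProd_reverse, neg_nonpos]
  rcases isPositive_or_isPositive_neg hbase (wordProd_apply_mem Δ hrefl hΔΦ tail.reverse (hΔΦ a))
    with hpos | hneg
  · exact hpos.inner_nonneg hγ
  · obtain ⟨l, hlen, hl⟩ :=
      exists_wordProd_eq_mul_reflection hind h0 hrefl hline hbase hΔΦ tail.reverse a hneg
    have hshort := hred l.reverse.length l.reverse.get <| by
      rw [List.ofFn_get, wordProd_reverse, hl, wordProd_reverse, mul_inv_rev, inv_inv,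
        Submodule.reflection_inv, hι]
    simp only [List.length_reverse, List.length_ofFn, tail] at hlen hshort
    omega

/-- if `w_{i₁} ⋯ w_{i_N}` is a reduced word in the Weyl group of a finite root
system `Φ` with base `Δ = (α₁, …, α_r)` and `γ` has nonnegative inner product with every
element of the base, then `⟨w_{i₁} ⋯ w_{i_N}(γ), α_{i₁}⟩ ≤ 0`. -/
theorem statement_17
    (V : Type) [NormedAddCommGroup V] [InnerProductSpace ℝ V] [FiniteDimensional ℝ V]
    (Φ : Set V) (hfin : Φ.Finite) (h0 : (0 : V) ∉ Φ)
    (hrefl : ∀ α ∈ Φ, ∀ β ∈ Φ, wrefl V α β ∈ Φ)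
    (hline : ∀ α ∈ Φ, {β | β ∈ Φ ∧ ∃ c : ℝ, β = c • α} = {α, -α})
    (r : ℕ) (Δ : Fin r → V)
    (hΔΦ : ∀ j, Δ j ∈ Φ)
    (hind : LinearIndependent ℝ Δ)
    (hspan : Submodule.span ℝ (Set.range Δ) = Submodule.span ℝ Φ)
    (hbase : ∀ β ∈ Φ, ∃ c : Fin r → ℝ,
      β = ∑ j : Fin r, c j • Δ j ∧ ((∀ j, 0 ≤ c j) ∨ (∀ j, c j ≤ 0)))
    (N : ℕ) (hN : 0 < N) (ι : Fin N → Fin r)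
    (hred : ∀ (m : ℕ) (κ : Fin m → Fin r),
      (List.ofFn fun t => wrefl V (Δ (κ t))).foldr (· ∘ ·) id
          = (List.ofFn fun t => wrefl V (Δ (ι t))).foldr (· ∘ ·) id →
      N ≤ m)
    (γ : V) (hγ : ∀ j : Fin r, 0 ≤ ⟪γ, Δ j⟫) :
    ⟪((List.ofFn fun t => wrefl V (Δ (ι t))).foldr (· ∘ ·) id) γ, Δ (ι ⟨0, hN⟩)⟫ ≤ 0 :=
  statement_17_general V Φ h0 hrefl hline r Δ hΔΦ hind hbase N hN ι hred γ hγ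

end MDS
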